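/- Let d, w₁, w₂ be positive integers, ξ a root of unity, χ a Dirichlet character mod d, and B_{n,χ,ξ}(x) the generalized twisted Bernoulli polynomials. Then for every n ≥ 0: w₁^{n−1} ∑_{i=0}^{dw₁−1} χ(i) ξ^{w₂ i} B_{n,χ,ξ^{w₁}}((w₂/w₁)·i) = w₂^{n−1} ∑_{i=0}^{dw₂−1} χ(i) ξ^{w₁ i} B_{n,χ,ξ^{w₂}}((w₁/w₂)·i) (equation (2.12)). -/

import Mathlib

/-- `e^{at}` as a formal power series over `ℂ`. -/
noncomputable def expS (a : ℂ) : PowerSeries ℂ :=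
  PowerSeries.mk fun n => a ^ n / n.factorial

open PowerSeries Finset

lemma expS_eq_rescale (a : ℂ) : expS a = rescale a (exp ℂ) := by
  ext n
  simp [expS, coeff_rescale, coeff_exp]
  ring

lemma expS_add (a b : ℂ) : expS a * expS b = expS (a + b) := by
  rw [expS_eq_rescale, expS_eq_rescale, expS_eq_rescale, exp_mul_exp_eq_exp_add]

lemma rescale_expS (c a : ℂ) : rescale c (expS a) = expS (a * c) := by
  rw [expS_eq_rescale, expS_eq_rescale, rescale_rescale]

lemma expS_zero : expS 0 = 1 := by
  ext n
  cases n <;> simp [expS, coeff_one]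

lemma expS_pow (a : ℂ) (j : ℕ) : expS a ^ j = expS (j * a) := by
  induction j with
  | zero => simp [expS_zero]
  | succ j ih =>
    rw [pow_succ, ih, expS_add]
    push_cast
    ring_nf

lemma rescale_C' (c a : ℂ) : rescale c (PowerSeries.C a) = PowerSeries.C a := by
  ext n
  simp [coeff_rescale, coeff_C]
  split <;> simp_all

lemma split_sum (d w v : ℕ) (ξ : ℂ) (χ : DirichletCharacter ℂ d) :
    (∑ i ∈ range (w * d), PowerSeries.C (χ (i : ZMod d) * ξ ^ (v * i)) * expS (v * i : ℕ)) =
      (∑ j ∈ range w, (PowerSeries.C (ξ ^ (v * d)) * expS (v * d : ℕ)) ^ j) *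
        (∑ a ∈ range d, PowerSeries.C (χ (a : ZMod d) * ξ ^ (v * a)) * expS (v * a : ℕ)) := by
  induction w with
  | zero => simp
  | succ w ih =>
    rw [Nat.succ_mul, Finset.sum_range_add, ih, Finset.sum_range_succ, add_mul, mul_sum]
    congr 1
    rw [mul_sum]
    apply Finset.sum_congr rfl
    intro a _
    have hχ : ((w * d + a : ℕ) : ZMod d) = (a : ZMod d) := by
      push_cast
      simp
    have hξp : ξ ^ (v * (w * d + a)) = ξ ^ (v * d * w) * ξ ^ (v * a) := by
      rw [← pow_add]
      congr 1
      ring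
    have hE : expS (v * (w * d + a) : ℕ) = expS (v * d * w : ℕ) * expS (v * a : ℕ) := by
      rw [expS_add]
      congr 1
      push_cast
      ring
    have hu : (PowerSeries.C (ξ ^ (v * d)) * expS (v * d : ℕ)) ^ w
        = PowerSeries.C (ξ ^ (v * d * w)) * expS (v * d * w : ℕ) := by
      rw [mul_pow, ← map_pow, ← pow_mul, expS_pow]
      congr 2
      push_cast
      ring
    rw [hχ, hξp, hE, hu]
    simp only [map_mul]
    ring

lemma geom_part (d w v : ℕ) (ξ : ℂ) :
    (∑ j ∈ range w, (PowerSeries.C (ξ ^ (v * d)) * expS (v * d : ℕ)) ^ j) *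
      (PowerSeries.C (ξ ^ (v * d)) * expS (v * d : ℕ) - 1) =
    PowerSeries.C (ξ ^ (w * v * d)) * expS (w * v * d : ℕ) - 1 := by
  rw [geom_sum_mul, mul_pow, ← map_pow, ← pow_mul, expS_pow]
  congr 2
  · ring
  · push_cast
    ring

lemma step (d w v : ℕ) (hw : (w : ℂ) ≠ 0) (ξ : ℂ)
    (χ : DirichletCharacter ℂ d) (F : ℕ → ℂ → ℂ)
    (hF : ∀ x : ℂ,
      (PowerSeries.mk fun n => F n x / n.factorial) *
          (PowerSeries.C ((ξ ^ w) ^ d) * expS d - 1) =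
        PowerSeries.X *
          (∑ a ∈ Finset.range d, PowerSeries.C (χ (a : ZMod d) * (ξ ^ w) ^ a) * expS a) *
          expS x) :
    (∑ i ∈ range (w * d), PowerSeries.C (χ (i : ZMod d) * ξ ^ (v * i)) *
        rescale (w : ℂ) (PowerSeries.mk fun n => F n (((v : ℂ) / (w : ℂ)) * i) / n.factorial)) *
      ((PowerSeries.C (ξ ^ (w * d)) * expS (w * d : ℕ) - 1) *
       (PowerSeries.C (ξ ^ (v * d)) * expS (v * d : ℕ) - 1)) =
    PowerSeries.C (w : ℂ) * PowerSeries.X *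
      ((∑ a ∈ range d, PowerSeries.C (χ (a : ZMod d) * ξ ^ (w * a)) * expS (w * a : ℕ)) *
       (∑ a ∈ range d, PowerSeries.C (χ (a : ZMod d) * ξ ^ (v * a)) * expS (v * a : ℕ))) *
      (PowerSeries.C (ξ ^ (w * v * d)) * expS (w * v * d : ℕ) - 1) := by
  have hres : ∀ x : ℂ,
      rescale (w : ℂ) (PowerSeries.mk fun n => F n x / n.factorial) *
          (PowerSeries.C (ξ ^ (w * d)) * expS (w * d : ℕ) - 1) =
        PowerSeries.C (w : ℂ) * PowerSeries.X *
          (∑ a ∈ range d, PowerSeries.C (χ (a : ZMod d) * ξ ^ (w * a)) * expS (w * a : ℕ)) *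
          expS ((w : ℂ) * x) := by
    intro x
    have h := congrArg (rescale (w : ℂ)) (hF x)
    simp only [map_mul, map_sub, map_one, map_sum, rescale_expS, rescale_C', rescale_X] at h
    have e1 : ∀ a : ℕ, ((a : ℂ) * (w : ℂ)) = ((w * a : ℕ) : ℂ) := by
      intro a; push_cast; ring
    rw [e1 d] at h
    simp only [e1, ← pow_mul, ← map_mul] at h
    rw [mul_comm x (w : ℂ)] at h
    exact h
  calc (∑ i ∈ range (w * d), PowerSeries.C (χ (i : ZMod d) * ξ ^ (v * i)) *
        rescale (w : ℂ) (PowerSeries.mk fun n => F n (((v : ℂ) / (w : ℂ)) * i) / n.factorial)) *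
      ((PowerSeries.C (ξ ^ (w * d)) * expS (w * d : ℕ) - 1) *
       (PowerSeries.C (ξ ^ (v * d)) * expS (v * d : ℕ) - 1))
      = (∑ i ∈ range (w * d), PowerSeries.C (χ (i : ZMod d) * ξ ^ (v * i)) *
          (rescale (w : ℂ) (PowerSeries.mk fun n => F n (((v : ℂ) / (w : ℂ)) * i) / n.factorial) *
           (PowerSeries.C (ξ ^ (w * d)) * expS (w * d : ℕ) - 1))) *
        (PowerSeries.C (ξ ^ (v * d)) * expS (v * d : ℕ) - 1) := by
        rw [← mul_assoc]
        congr 1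
        rw [Finset.sum_mul]
        apply Finset.sum_congr rfl
        intro i _
        ring
    _ = (∑ i ∈ range (w * d), PowerSeries.C (χ (i : ZMod d) * ξ ^ (v * i)) *
          (PowerSeries.C (w : ℂ) * PowerSeries.X *
            (∑ a ∈ range d, PowerSeries.C (χ (a : ZMod d) * ξ ^ (w * a)) * expS (w * a : ℕ)) *
            expS (v * i : ℕ))) *
        (PowerSeries.C (ξ ^ (v * d)) * expS (v * d : ℕ) - 1) := by
        congr 1
        apply Finset.sum_congr rfl
        intro i _
        rw [hres]
        congr 1
        rw [show (w : ℂ) * ((v : ℂ) / (w : ℂ) * (i : ℂ)) = ((v * i : ℕ) : ℂ) by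
          push_cast; field_simp]
    _ = PowerSeries.C (w : ℂ) * PowerSeries.X *
          (∑ a ∈ range d, PowerSeries.C (χ (a : ZMod d) * ξ ^ (w * a)) * expS (w * a : ℕ)) *
          ((∑ i ∈ range (w * d), PowerSeries.C (χ (i : ZMod d) * ξ ^ (v * i)) * expS (v * i : ℕ)) *
            (PowerSeries.C (ξ ^ (v * d)) * expS (v * d : ℕ) - 1)) := by
        conv_lhs => rw [Finset.sum_mul]
        conv_rhs => rw [Finset.sum_mul, Finset.mul_sum]
        apply Finset.sum_congr rfl
        intro i _
        ring
    _ = _ := by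
        rw [split_sum, mul_assoc (∑ j ∈ range w, _), mul_comm
          (∑ a ∈ range d, PowerSeries.C (χ (a : ZMod d) * ξ ^ (v * a)) * expS (v * a : ℕ)),
          ← mul_assoc (∑ j ∈ range w, _), geom_part]
        ring

/-- Multiplication-type symmetry (2.12) for the generalized twisted Bernoulli polynomials:
`w₁^{n-1} ∑_{i<dw₁} χ(i) ξ^{w₂i} B_{n,χ,ξ^{w₁}}((w₂/w₁)i)
= w₂^{n-1} ∑_{i<dw₂} χ(i) ξ^{w₁i} B_{n,χ,ξ^{w₂}}((w₁/w₂)i)`. -/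
theorem generalized_twisted_bernoulli_numbers_multiplication_symmetry
    (d w₁ w₂ : ℕ) (hd : 0 < d) (hw₁ : 0 < w₁) (hw₂ : 0 < w₂)
    (ξ : ℂ) (hξ : ∃ m : ℕ, 0 < m ∧ ξ ^ m = 1)
    (χ : DirichletCharacter ℂ d) (B1 B2 : ℕ → ℂ → ℂ)
    (hB1 : ∀ x : ℂ,
      (PowerSeries.mk fun n => B1 n x / n.factorial) *
          (PowerSeries.C ((ξ ^ w₁) ^ d) * expS d - 1) =
        PowerSeries.X *
          (∑ a ∈ Finset.range d, PowerSeries.C (χ (a : ZMod d) * (ξ ^ w₁) ^ a) * expS a) *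
          expS x)
    (hB2 : ∀ x : ℂ,
      (PowerSeries.mk fun n => B2 n x / n.factorial) *
          (PowerSeries.C ((ξ ^ w₂) ^ d) * expS d - 1) =
        PowerSeries.X *
          (∑ a ∈ Finset.range d, PowerSeries.C (χ (a : ZMod d) * (ξ ^ w₂) ^ a) * expS a) *
          expS x)
    (n : ℕ) :
    (w₁ : ℂ) ^ ((n : ℤ) - 1) *
        ∑ i ∈ Finset.range (w₁ * d), χ (i : ZMod d) * ξ ^ (w₂ * i) *
          B1 n (((w₂ : ℂ) / (w₁ : ℂ)) * i) =
      (w₂ : ℂ) ^ ((n : ℤ) - 1) *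
        ∑ i ∈ Finset.range (w₂ * d), χ (i : ZMod d) * ξ ^ (w₁ * i) *
          B2 n (((w₁ : ℂ) / (w₂ : ℂ)) * i) := by
  have hξ0 : ξ ≠ 0 := by
    obtain ⟨m, hm, h1⟩ := hξ
    intro h
    rw [h, zero_pow hm.ne'] at h1
    exact zero_ne_one h1
  have hw₁c : (w₁ : ℂ) ≠ 0 := Nat.cast_ne_zero.mpr hw₁.ne'
  have hw₂c : (w₂ : ℂ) ≠ 0 := Nat.cast_ne_zero.mpr hw₂.ne'
  have hA : ∀ m : ℕ, 0 < m →
      (PowerSeries.C (ξ ^ (m * d)) * expS (m * d : ℕ) - 1) ≠ 0 := by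
    intro m hm h
    have h1 := congrArg (PowerSeries.coeff 1) h
    simp only [map_sub, PowerSeries.coeff_C_mul, PowerSeries.coeff_one, map_zero, expS,
      PowerSeries.coeff_mk] at h1
    norm_num at h1
    rcases h1 with ⟨h1, -⟩ | h1
    · exact hξ0 h1
    · rcases h1 with h1 | h1
      · exact hm.ne' h1
      · exact hd.ne' h1
  have H1 := step d w₁ w₂ hw₁c ξ χ B1 hB1
  have H2 := step d w₂ w₁ hw₂c ξ χ B2 hB2
  have key : PowerSeries.C (w₂ : ℂ) *
      (∑ i ∈ Finset.range (w₁ * d), PowerSeries.C (χ (i : ZMod d) * ξ ^ (w₂ * i)) *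
        PowerSeries.rescale (w₁ : ℂ)
          (PowerSeries.mk fun n => B1 n (((w₂ : ℂ) / (w₁ : ℂ)) * i) / n.factorial)) =
    PowerSeries.C (w₁ : ℂ) *
      (∑ i ∈ Finset.range (w₂ * d), PowerSeries.C (χ (i : ZMod d) * ξ ^ (w₁ * i)) *
        PowerSeries.rescale (w₂ : ℂ)
          (PowerSeries.mk fun n => B2 n (((w₁ : ℂ) / (w₂ : ℂ)) * i) / n.factorial)) := by
    apply mul_right_cancel₀ (b :=
      (PowerSeries.C (ξ ^ (w₁ * d)) * expS (w₁ * d : ℕ) - 1) *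
      (PowerSeries.C (ξ ^ (w₂ * d)) * expS (w₂ * d : ℕ) - 1))
      (mul_ne_zero (hA w₁ hw₁) (hA w₂ hw₂))
    calc _ = PowerSeries.C (w₂ : ℂ) * ((∑ i ∈ Finset.range (w₁ * d),
          PowerSeries.C (χ (i : ZMod d) * ξ ^ (w₂ * i)) *
          PowerSeries.rescale (w₁ : ℂ)
            (PowerSeries.mk fun n => B1 n (((w₂ : ℂ) / (w₁ : ℂ)) * i) / n.factorial)) *
        ((PowerSeries.C (ξ ^ (w₁ * d)) * expS (w₁ * d : ℕ) - 1) *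
         (PowerSeries.C (ξ ^ (w₂ * d)) * expS (w₂ * d : ℕ) - 1))) := by ring
      _ = PowerSeries.C (w₁ : ℂ) * ((∑ i ∈ Finset.range (w₂ * d),
          PowerSeries.C (χ (i : ZMod d) * ξ ^ (w₁ * i)) *
          PowerSeries.rescale (w₂ : ℂ)
            (PowerSeries.mk fun n => B2 n (((w₁ : ℂ) / (w₂ : ℂ)) * i) / n.factorial)) *
        ((PowerSeries.C (ξ ^ (w₂ * d)) * expS (w₂ * d : ℕ) - 1) *
         (PowerSeries.C (ξ ^ (w₁ * d)) * expS (w₁ * d : ℕ) - 1))) := by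
          rw [H1, H2, show w₂ * w₁ * d = w₁ * w₂ * d by ring]
          ring
      _ = _ := by ring
  have hc := congrArg (PowerSeries.coeff n) key
  simp only [PowerSeries.coeff_C_mul, map_sum, PowerSeries.coeff_rescale,
    PowerSeries.coeff_mk] at hc
  have hfac : (n.factorial : ℂ) ≠ 0 := Nat.cast_ne_zero.mpr n.factorial_ne_zero
  have e1 : ∑ x ∈ Finset.range (w₁ * d), χ (x : ZMod d) * ξ ^ (w₂ * x) *
        ((w₁ : ℂ) ^ n * (B1 n ((w₂ : ℂ) / (w₁ : ℂ) * x) / n.factorial)) =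
      ((w₁ : ℂ) ^ n / n.factorial) * ∑ i ∈ Finset.range (w₁ * d),
        χ (i : ZMod d) * ξ ^ (w₂ * i) * B1 n ((w₂ : ℂ) / (w₁ : ℂ) * i) := by
    rw [Finset.mul_sum]
    exact Finset.sum_congr rfl fun i _ => by ring
  have e2 : ∑ x ∈ Finset.range (w₂ * d), χ (x : ZMod d) * ξ ^ (w₁ * x) *
        ((w₂ : ℂ) ^ n * (B2 n ((w₁ : ℂ) / (w₂ : ℂ) * x) / n.factorial)) =
      ((w₂ : ℂ) ^ n / n.factorial) * ∑ i ∈ Finset.range (w₂ * d),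
        χ (i : ZMod d) * ξ ^ (w₁ * i) * B2 n ((w₁ : ℂ) / (w₂ : ℂ) * i) := by
    rw [Finset.mul_sum]
    exact Finset.sum_congr rfl fun i _ => by ring
  rw [e1, e2] at hc
  rw [zpow_sub_one₀ hw₁c, zpow_sub_one₀ hw₂c, zpow_natCast, zpow_natCast]
  field_simp at hc ⊢
  linear_combination hc
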